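/- Define the mean energy E(t) = (σ²L/(2νπ²))·∑_{k=1}^∞ (1 − exp(−2νπ²k²t/L²))/k² for σ, ν, L, t > 0. There exist universal constants 0 < c₁ ≤ c₂ such that for all σ, ν, L, t > 0 satisfying νt ≤ L², one has c₁·σ²·√(t/ν) ≤ E(t) ≤ c₂·σ²·√(t/ν). -/

import Mathlib

open Real

private lemma summable_inv_sq : Summable (fun k : ℕ => 1 / ((k : ℝ) + 1) ^ 2) := by
  have h := (Real.summable_one_div_nat_pow (p := 2)).mpr one_lt_two
  have h2 := (summable_nat_add_iff (f := fun n : ℕ => 1 / (n : ℝ) ^ 2) 1).mpr h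
  exact h2.congr (fun n => by push_cast; ring)

private lemma telescope_hasSum (N : ℕ) (hN : 1 ≤ N) :
    HasSum (fun k : ℕ => 1 / (((k : ℝ) + N) * ((k : ℝ) + N + 1))) (1 / (N : ℝ)) := by
  have hN1 : (1 : ℝ) ≤ (N : ℝ) := by exact_mod_cast hN
  have hpos : ∀ k : ℕ, (0 : ℝ) < (k : ℝ) + N := fun k => by
    have : (0 : ℝ) ≤ (k : ℝ) := Nat.cast_nonneg k
    linarith
  have hkey : ∀ k : ℕ, 1 / (((k : ℝ) + N) * ((k : ℝ) + N + 1))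
      = 1 / ((k : ℝ) + N) - 1 / ((k : ℝ) + N + 1) := by
    intro k
    have h1 := hpos k
    rw [div_sub_div _ _ (by linarith) (by linarith)]
    congr 1
    ring
  rw [hasSum_iff_tendsto_nat_of_nonneg (fun k => by positivity)]
  have hsum : ∀ n : ℕ, ∑ i ∈ Finset.range n, 1 / (((i : ℝ) + N) * ((i : ℝ) + N + 1))
      = 1 / (N : ℝ) - 1 / ((n : ℝ) + N) := by
    intro n
    induction n with
    | zero => simp
    | succ n ih =>
        rw [Finset.sum_range_succ, ih, hkey n]
        push_cast
        ring
  simp only [hsum]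
  have h0 : Filter.Tendsto (fun n : ℕ => 1 / ((n : ℝ) + N)) Filter.atTop (nhds 0) := by
    simp only [one_div]
    apply Filter.Tendsto.inv_tendsto_atTop
    exact Filter.tendsto_atTop_add_const_right _ _ tendsto_natCast_atTop_atTop
  have := Filter.Tendsto.sub (tendsto_const_nhds (x := 1 / (N : ℝ))) h0
  simpa using this

private lemma tail_bound (N : ℕ) (hN : 1 ≤ N) :
    ∑' k : ℕ, 1 / ((k : ℝ) + N + 1) ^ 2 ≤ 1 / (N : ℝ) := by
  have hN1 : (1 : ℝ) ≤ (N : ℝ) := by exact_mod_cast hN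
  have hpos : ∀ k : ℕ, (0 : ℝ) < (k : ℝ) + N := fun k => by
    have : (0 : ℝ) ≤ (k : ℝ) := Nat.cast_nonneg k
    linarith
  have hts := telescope_hasSum N hN
  rw [← hts.tsum_eq]
  apply Summable.tsum_le_tsum
  · intro k
    have h1 := hpos k
    apply div_le_div₀ (by norm_num) le_rfl (by nlinarith)
    nlinarith
  · have : Summable (fun k : ℕ => 1 / (((k + N : ℕ) : ℝ) + 1) ^ 2) :=
      (summable_nat_add_iff (f := fun n : ℕ => 1 / ((n : ℝ) + 1) ^ 2) N).mpr summable_inv_sq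
    exact this.congr (fun k => by push_cast; ring_nf)
  · exact hts.summable

set_option maxHeartbeats 1000000 in
private lemma series_bounds (a : ℝ) (ha : 0 < a) (ha' : a ≤ 2 * π ^ 2) :
    Real.sqrt a / 48 ≤ (∑' k : ℕ, (1 - Real.exp (-(a * ((k : ℝ) + 1) ^ 2))) / ((k : ℝ) + 1) ^ 2) ∧
    (∑' k : ℕ, (1 - Real.exp (-(a * ((k : ℝ) + 1) ^ 2))) / ((k : ℝ) + 1) ^ 2)
      ≤ 7 * Real.sqrt a := by
  set f : ℕ → ℝ := fun k => (1 - Real.exp (-(a * ((k : ℝ) + 1) ^ 2))) / ((k : ℝ) + 1) ^ 2 with hf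
  set s := Real.sqrt a with hsdef
  have hs : 0 < s := Real.sqrt_pos.mpr ha
  have hs2 : s ^ 2 = a := Real.sq_sqrt ha.le
  set N := ⌈1 / s⌉₊ with hNdef
  have hN1 : 1 ≤ N := Nat.one_le_iff_ne_zero.mpr (by
    have : 0 < N := Nat.ceil_pos.mpr (by positivity)
    omega)
  have hNR1 : (1 : ℝ) ≤ (N : ℝ) := by exact_mod_cast hN1
  have hNge : 1 / s ≤ (N : ℝ) := Nat.le_ceil _
  have hsN : 1 ≤ s * N := by
    rw [div_le_iff₀ hs] at hNge
    linarith
  have hs5 : s ≤ 5 := by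
    have hp : π < 3.15 := by
      have := Real.pi_lt_d2
      norm_num at this ⊢
      linarith
    have h1 : a ≤ 25 := by nlinarith [Real.pi_pos]
    calc s ≤ Real.sqrt 25 := Real.sqrt_le_sqrt h1
      _ = 5 := by rw [show (25 : ℝ) = 5 ^ 2 by norm_num, Real.sqrt_sq (by norm_num)]
  have hsN6 : s * N ≤ 6 := by
    have h1 : (N : ℝ) < 1 / s + 1 := Nat.ceil_lt_add_one (by positivity)
    have h2 : s * (N : ℝ) < s * (1 / s + 1) := by
      apply mul_lt_mul_of_pos_left h1 hs
    have h3 : s * (1 / s + 1) = 1 + s := by field_simp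
    linarith
  have hNle : (N : ℝ) ≤ 6 / s := by
    rw [le_div_iff₀ hs]
    linarith [hsN6]
  have hfnonneg : ∀ k, 0 ≤ f k := fun k => by
    apply div_nonneg _ (by positivity)
    have : Real.exp (-(a * ((k : ℝ) + 1) ^ 2)) ≤ 1 := by
      rw [Real.exp_le_one_iff]
      have : (0:ℝ) ≤ a * ((k : ℝ) + 1) ^ 2 := by positivity
      linarith
    linarith
  have hfle : ∀ k, f k ≤ 1 / ((k : ℝ) + 1) ^ 2 := fun k => by
    rw [hf]
    exact div_le_div₀ (by norm_num)
      (by nlinarith [Real.exp_pos (-(a * ((k : ℝ) + 1) ^ 2))]) (by positivity) le_rfl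
  have hflea : ∀ k, f k ≤ a := fun k => by
    have hk1 : (0 : ℝ) < ((k : ℝ) + 1) ^ 2 := by positivity
    have h1 : 1 - Real.exp (-(a * ((k : ℝ) + 1) ^ 2)) ≤ a * ((k : ℝ) + 1) ^ 2 := by
      have := Real.add_one_le_exp (-(a * ((k : ℝ) + 1) ^ 2))
      linarith
    rw [hf, div_le_iff₀ hk1]
    nlinarith
  have hsummable : Summable f := Summable.of_nonneg_of_le hfnonneg hfle summable_inv_sq
  have hsummable_shift : Summable (fun k : ℕ => f (k + N)) :=
    (summable_nat_add_iff N).mpr hsummable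
  constructor
  · -- lower bound
    have hfin : ∑ i ∈ Finset.range N, f (i + N) ≤ ∑' k, f (k + N) :=
      Summable.sum_le_tsum _ (fun i _ => hfnonneg _) hsummable_shift
    have htail_le : ∑' k, f (k + N) ≤ ∑' k, f k := by
      rw [← Summable.sum_add_tsum_nat_add N hsummable]
      have : 0 ≤ ∑ i ∈ Finset.range N, f i := Finset.sum_nonneg (fun i _ => hfnonneg i)
      linarith
    have hterm : ∀ i ∈ Finset.range N, (1 / 2) / ((2 * (N : ℝ)) ^ 2) ≤ f (i + N) := by
      intro i hi
      have hiN : i < N := Finset.mem_range.mp hi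
      have hiR : (i : ℝ) < N := by exact_mod_cast hiN
      have hi0 : (0 : ℝ) ≤ (i : ℝ) := Nat.cast_nonneg i
      have hxN : (N : ℝ) ≤ ((i + N : ℕ) : ℝ) + 1 := by push_cast; linarith
      have hq : (N : ℝ) ^ 2 ≤ (((i + N : ℕ) : ℝ) + 1) ^ 2 := by nlinarith
      have hsq : 1 ≤ (s * N) ^ 2 := by nlinarith
      have hx1 : 1 ≤ a * (((i + N : ℕ) : ℝ) + 1) ^ 2 := by
        have h1 : a * (N : ℝ) ^ 2 ≤ a * (((i + N : ℕ) : ℝ) + 1) ^ 2 :=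
          mul_le_mul_of_nonneg_left hq ha.le
        have h2 : (s * (N : ℝ)) ^ 2 = a * (N : ℝ) ^ 2 := by rw [mul_pow, hs2]
        linarith
      have hiR2 : (i : ℝ) + 1 ≤ (N : ℝ) := by exact_mod_cast hiN
      have hden : (((i + N : ℕ) : ℝ) + 1) ^ 2 ≤ (2 * (N : ℝ)) ^ 2 := by
        push_cast
        nlinarith [hiR2, hNR1, hi0]
      have hnum : (1 : ℝ) / 2 ≤ 1 - Real.exp (-(a * (((i + N : ℕ) : ℝ) + 1) ^ 2)) := by
        have he : Real.exp (-(a * (((i + N : ℕ) : ℝ) + 1) ^ 2)) ≤ Real.exp (-1) :=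
          Real.exp_le_exp.mpr (by linarith)
        have he2 : Real.exp (-1) ≤ 1 / 2 := by
          have h2e : (2 : ℝ) ≤ Real.exp 1 := by linarith [Real.exp_one_gt_d9]
          rw [Real.exp_neg, inv_le_comm₀ (Real.exp_pos 1) (by norm_num)]
          norm_num
          linarith
        linarith
      rw [hf]
      exact div_le_div₀
        (by nlinarith [Real.exp_pos (-(a * (((i + N : ℕ) : ℝ) + 1) ^ 2))])
        hnum (by positivity) hden
    have hsum_ge : (N : ℝ) * ((1 / 2) / ((2 * (N : ℝ)) ^ 2))
        ≤ ∑ i ∈ Finset.range N, f (i + N) := by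
      have := Finset.card_nsmul_le_sum (Finset.range N) (fun i => f (i + N))
        ((1 / 2) / ((2 * (N : ℝ)) ^ 2)) hterm
      simpa [nsmul_eq_mul] using this
    have hfinal : s / 48 ≤ (N : ℝ) * ((1 / 2) / ((2 * (N : ℝ)) ^ 2)) := by
      have hNpos : (0 : ℝ) < N := by linarith
      have heq : (N : ℝ) * ((1 / 2) / ((2 * (N : ℝ)) ^ 2)) = 1 / (8 * N) := by
        field_simp
        ring
      rw [heq, div_le_div_iff₀ (by norm_num) (by positivity)]
      nlinarith
    linarith
  · -- upper bound
    rw [← Summable.sum_add_tsum_nat_add N hsummable]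
    have hhead : ∑ i ∈ Finset.range N, f i ≤ (N : ℝ) * a := by
      have := Finset.sum_le_card_nsmul (Finset.range N) f a (fun i _ => hflea i)
      simpa [nsmul_eq_mul] using this
    have htail : ∑' k, f (k + N) ≤ 1 / (N : ℝ) := by
      refine le_trans (Summable.tsum_le_tsum (fun k => ?_) hsummable_shift ?_) (tail_bound N hN1)
      · calc f (k + N) ≤ 1 / (((k + N : ℕ) : ℝ) + 1) ^ 2 := hfle _
          _ = 1 / ((k : ℝ) + N + 1) ^ 2 := by push_cast; ring_nf
      · have : Summable (fun k : ℕ => 1 / (((k + N : ℕ) : ℝ) + 1) ^ 2) :=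
          (summable_nat_add_iff (f := fun n : ℕ => 1 / ((n : ℝ) + 1) ^ 2) N).mpr summable_inv_sq
        exact this.congr (fun k => by push_cast; ring_nf)
    have h1 : (N : ℝ) * a ≤ 6 * s := by
      have : (N : ℝ) * a ≤ (6 / s) * a := mul_le_mul_of_nonneg_right hNle ha.le
      have h3 : (6 / s) * a = 6 * s := by
        rw [← hs2]; field_simp
      linarith
    have h2 : 1 / (N : ℝ) ≤ s := by
      rw [div_le_iff₀ (by linarith : (0:ℝ) < (N:ℝ))]
      linarith
    linarith

/-- Transient scaling of the mean energy
`E(t) = (σ²L/(2νπ²)) ∑_{k=1}^∞ (1 - e^{-2νπ²k²t/L²})/k²`: for `νt ≤ L²` it is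
comparable to `σ² √(t/ν)` with universal constants. -/
theorem mean_energy_transient_scaling :
    ∃ c₁ c₂ : ℝ, 0 < c₁ ∧ c₁ ≤ c₂ ∧
      ∀ σ ν L t : ℝ, 0 < σ → 0 < ν → 0 < L → 0 < t → ν * t ≤ L ^ 2 →
        c₁ * σ ^ 2 * Real.sqrt (t / ν) ≤
            σ ^ 2 * L / (2 * ν * π ^ 2) *
              ∑' k : ℕ, (1 - Real.exp (-2 * ν * π ^ 2 * ((k : ℝ) + 1) ^ 2 * t / L ^ 2)) /
                ((k : ℝ) + 1) ^ 2 ∧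
          σ ^ 2 * L / (2 * ν * π ^ 2) *
              ∑' k : ℕ, (1 - Real.exp (-2 * ν * π ^ 2 * ((k : ℝ) + 1) ^ 2 * t / L ^ 2)) /
                ((k : ℝ) + 1) ^ 2 ≤
            c₂ * σ ^ 2 * Real.sqrt (t / ν) := by
  refine ⟨Real.sqrt 2 / (96 * π), 7 * Real.sqrt 2 / (2 * π), by positivity, ?_, ?_⟩
  · rw [div_le_div_iff₀ (by positivity) (by positivity)]
    nlinarith [Real.sqrt_nonneg 2, Real.pi_pos]
  intro σ ν L t hσ hν hL ht hνt
  have hπ := Real.pi_pos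
  set a := 2 * ν * π ^ 2 * t / L ^ 2 with hadef
  have ha : 0 < a := by positivity
  have ha' : a ≤ 2 * π ^ 2 := by
    rw [hadef, div_le_iff₀ (by positivity)]
    nlinarith
  obtain ⟨h1, h2⟩ := series_bounds a ha ha'
  have hre : (∑' k : ℕ, (1 - Real.exp (-2 * ν * π ^ 2 * ((k : ℝ) + 1) ^ 2 * t / L ^ 2)) /
        ((k : ℝ) + 1) ^ 2)
      = ∑' k : ℕ, (1 - Real.exp (-(a * ((k : ℝ) + 1) ^ 2))) / ((k : ℝ) + 1) ^ 2 := by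
    apply tsum_congr
    intro k
    congr 2
    rw [hadef]
    ring
  rw [hre]
  set S := ∑' k : ℕ, (1 - Real.exp (-(a * ((k : ℝ) + 1) ^ 2))) / ((k : ℝ) + 1) ^ 2 with hS
  -- √(t/ν) = √(νt)/ν and √a = √2 π √(νt) / L
  have hu2 : Real.sqrt (ν * t) ^ 2 = ν * t := Real.sq_sqrt (by positivity)
  have hu : 0 < Real.sqrt (ν * t) := Real.sqrt_pos.mpr (by positivity)
  set u := Real.sqrt (ν * t) with hudef
  have htν : Real.sqrt (t / ν) = u / ν := by
    rw [show t / ν = (ν * t) / ν ^ 2 by field_simp,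
      Real.sqrt_div (by positivity) _, Real.sqrt_sq hν.le]
  have hsa : Real.sqrt a = Real.sqrt 2 * π * u / L := by
    rw [hadef, show 2 * ν * π ^ 2 * t / L ^ 2 = (Real.sqrt 2 * π * u / L) ^ 2 by
      rw [div_pow, mul_pow, mul_pow, Real.sq_sqrt (by norm_num : (0:ℝ) ≤ 2), hu2]; ring]
    exact Real.sqrt_sq (by positivity)
  constructor
  · calc Real.sqrt 2 / (96 * π) * σ ^ 2 * Real.sqrt (t / ν)
        = σ ^ 2 * L / (2 * ν * π ^ 2) * (Real.sqrt a / 48) := by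
          rw [htν, hsa]; field_simp; ring
      _ ≤ σ ^ 2 * L / (2 * ν * π ^ 2) * S := by
          apply mul_le_mul_of_nonneg_left h1 (by positivity)
  · calc σ ^ 2 * L / (2 * ν * π ^ 2) * S
        ≤ σ ^ 2 * L / (2 * ν * π ^ 2) * (7 * Real.sqrt a) := by
          apply mul_le_mul_of_nonneg_left h2 (by positivity)
      _ = 7 * Real.sqrt 2 / (2 * π) * σ ^ 2 * Real.sqrt (t / ν) := by
          rw [htν, hsa]; field_simp
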